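/- Let 0 < μ < 2, γ > 0, λ > 0, m > 0. Then there exist constants C₁ > 0 and C₂ ≥ 0 (depending on μ, γ, λ, m) such that for all ψ ∈ Q with ‖ψ‖² = m, E(ψ) ≥ C₁‖ψ‖²_Q − C₂, where E(ψ) = ½‖ψ'‖² − (2γ)⁻¹|ψ(0⁺)−ψ(0⁻)|² − λ(2μ+2)⁻¹‖ψ‖_{2μ+2}^{2μ+2}. -/

import Mathlib

open MeasureTheory Filter Set

/-- The jump of a function at the origin: `ψ(0⁺) − ψ(0⁻)`. -/
noncomputable def jumpC (ψ : ℝ → ℂ) : ℂ :=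
  limUnder (nhdsWithin 0 (Ioi 0)) ψ - limUnder (nhdsWithin 0 (Iio 0)) ψ

/-- Membership in the energy space `Q = H¹(ℝ⁺) ⊕ H¹(ℝ⁻)`, with `ψ'` the
derivative of `ψ` on each half-line. -/
structure MemQ (ψ ψ' : ℝ → ℂ) : Prop where
  deriv_pos : ∀ x ∈ Ioi (0:ℝ), HasDerivWithinAt ψ (ψ' x) (Ioi 0) x
  deriv_neg : ∀ x ∈ Iio (0:ℝ), HasDerivWithinAt ψ (ψ' x) (Iio 0) x
  l2 : Integrable (fun x => ‖ψ x‖^2)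
  l2' : Integrable (fun x => ‖ψ' x‖^2)
  lim_pos : ∃ a : ℂ, Tendsto ψ (nhdsWithin 0 (Ioi 0)) (nhds a)
  lim_neg : ∃ a : ℂ, Tendsto ψ (nhdsWithin 0 (Iio 0)) (nhds a)

/-- The squared `Q`-norm `‖ψ‖² + ‖ψ'‖²`. -/
noncomputable def nQsq (ψ ψ' : ℝ → ℂ) : ℝ :=
  (∫ x, ‖ψ x‖^2) + ∫ x, ‖ψ' x‖^2

/-- The quadratic form of the attractive δ' interaction. -/
noncomputable def Fform (γ : ℝ) (ψ ψ' : ℝ → ℂ) : ℝ :=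
  (∫ x, ‖ψ' x‖^2) - γ⁻¹ * ‖jumpC ψ‖^2


/-- The NLS energy with an attractive δ' defect. -/
noncomputable def Efun (γ lam μ : ℝ) (ψ ψ' : ℝ → ℂ) : ℝ :=
  (1/2) * (∫ x, ‖ψ' x‖^2) - (1/(2*γ)) * ‖jumpC ψ‖^2
    - lam/(2*μ+2) * ∫ x, ‖ψ x‖ ^ (2*μ+2)

/-!
On each half-line `‖ψ‖²` and its derivative `2 Re ⟪ψ, ψ'⟫` are integrable, so `‖ψ‖²` vanishes at
infinity and the fundamental theorem of calculus gives `‖ψ‖²_∞ ≤ 2 ∫ |ψ| |ψ'| ≤ 2 ‖ψ‖ ‖ψ'‖`; the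
one-sided limits at `0` obey the same bound. This controls the jump term by a multiple of `‖ψ'‖`
and, via `‖ψ‖_{2μ+2}^{2μ+2} ≤ ‖ψ‖_∞^{2μ} ‖ψ‖²`, the nonlinear term by a multiple of `‖ψ'‖^μ`.
At fixed mass both are sublinear powers of `‖ψ'‖²` because `μ < 2`, so Young's inequality
absorbs them into a fraction of the kinetic term `½ ‖ψ'‖²`.
-/

open scoped RealInnerProductSpace

theorem exists_mul_rpow_le_mul_add_const {k θ ε : ℝ} (hk : 0 ≤ k) (hθ0 : 0 < θ) (hθ1 : θ < 1)
    (hε : 0 < ε) : ∃ C ≥ 0, ∀ b ≥ 0, k * b ^ θ ≤ ε * b + C := by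
  set s := (ε / θ) ^ θ
  have hs : 0 < s := by positivity
  set K := (k / s) ^ (1 - θ)⁻¹
  refine ⟨(1 - θ) * K, by nlinarith [show 0 ≤ K by positivity], fun b hb => ?_⟩
  have h := Real.geom_mean_le_arith_mean2_weighted hθ0.le (sub_nonneg.2 hθ1.le)
    (by positivity : 0 ≤ ε / θ * b) (by positivity : 0 ≤ K) (add_sub_cancel θ 1)
  have hK : K ^ (1 - θ) = k / s := Real.rpow_inv_rpow (by positivity) (by linarith)
  rw [Real.mul_rpow (by positivity) hb, hK] at h
  calc k * b ^ θ = s * b ^ θ * (k / s) := by field_simp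
    _ ≤ θ * (ε / θ * b) + (1 - θ) * K := h
    _ = ε * b + (1 - θ) * K := by field_simp

section HalfLine

variable {E : Type*} [NormedAddCommGroup E] [InnerProductSpace ℝ E] {f f' : ℝ → E} {a x : ℝ}

theorem integrableOn_two_mul_inner_of_hasDerivAt {s : Set ℝ} (hs : MeasurableSet s)
    (hd : ∀ t ∈ s, HasDerivAt f (f' t) t)
    (hff' : IntegrableOn (fun t => ‖f t‖ * ‖f' t‖) s) :
    IntegrableOn (fun t => 2 * ⟪f t, f' t⟫) s := by
  refine (hff'.const_mul 2).mono' ?_ (.of_forall fun t => ?_)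
  · refine (aestronglyMeasurable_deriv (‖f ·‖ ^ 2) _).congr ?_
    filter_upwards [ae_restrict_mem hs] with t ht
    exact (hd t ht).norm_sq.deriv
  · rw [norm_mul, Real.norm_two]
    exact mul_le_mul_of_nonneg_left (norm_inner_le_norm _ _) zero_le_two

theorem norm_sq_le_of_hasDerivAt_Ioi (hd : ∀ t ∈ Ioi a, HasDerivAt f (f' t) t)
    (hf : IntegrableOn (fun t => ‖f t‖ ^ 2) (Ioi a))
    (hff' : IntegrableOn (fun t => ‖f t‖ * ‖f' t‖) (Ioi a)) (hx : a < x) :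
    ‖f x‖ ^ 2 ≤ 2 * ∫ t in Ioi a, ‖f t‖ * ‖f' t‖ := by
  have hg := fun t ht => (hd t ht).norm_sq
  have hg' := integrableOn_two_mul_inner_of_hasDerivAt measurableSet_Ioi hd hff'
  have hxa : Ioi x ⊆ Ioi a := Ioi_subset_Ioi hx.le
  have hftc := integral_Ioi_of_hasDerivAt_of_tendsto (hg x hx).continuousAt.continuousWithinAt
    (fun t ht => hg t (hxa ht)) (hg'.mono_set hxa)
    (tendsto_zero_of_hasDerivAt_of_integrableOn_Ioi hg hg' hf)
  calc ‖f x‖ ^ 2 = ∫ t in Ioi x, -(2 * ⟪f t, f' t⟫) := by rw [integral_neg, hftc, zero_sub, neg_neg]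
    _ ≤ ∫ t in Ioi x, 2 * (‖f t‖ * ‖f' t‖) :=
      setIntegral_mono (hg'.mono_set hxa).neg ((hff'.mono_set hxa).const_mul 2) fun t => by
        linarith [neg_le_of_abs_le (abs_real_inner_le_norm (f t) (f' t))]
    _ ≤ ∫ t in Ioi a, 2 * (‖f t‖ * ‖f' t‖) :=
      setIntegral_mono_set (hff'.const_mul 2) (.of_forall fun t => by positivity)
        hxa.eventuallyLE
    _ = 2 * ∫ t in Ioi a, ‖f t‖ * ‖f' t‖ := integral_const_mul _ _

theorem norm_sq_le_of_hasDerivAt_Iio (hd : ∀ t ∈ Iio a, HasDerivAt f (f' t) t)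
    (hf : IntegrableOn (fun t => ‖f t‖ ^ 2) (Iio a))
    (hff' : IntegrableOn (fun t => ‖f t‖ * ‖f' t‖) (Iio a)) (hx : x < a) :
    ‖f x‖ ^ 2 ≤ 2 * ∫ t in Iio a, ‖f t‖ * ‖f' t‖ := by
  have hg := fun t ht => (hd t ht).norm_sq
  have hg' := integrableOn_two_mul_inner_of_hasDerivAt measurableSet_Iio hd hff'
  have hxa : Iic x ⊆ Iio a := Iic_subset_Iio.2 hx
  have hftc := integral_Iic_of_hasDerivAt_of_tendsto (hg x hx).continuousAt.continuousWithinAt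
    (fun t ht => hg t (hxa (Iio_subset_Iic_self ht))) (hg'.mono_set hxa)
    (tendsto_zero_of_hasDerivAt_of_integrableOn_Iic (fun t ht => hg t (hxa ht))
      (hg'.mono_set hxa) (hf.mono_set hxa))
  calc ‖f x‖ ^ 2 = ∫ t in Iic x, 2 * ⟪f t, f' t⟫ := by rw [hftc, sub_zero]
    _ ≤ ∫ t in Iic x, 2 * (‖f t‖ * ‖f' t‖) :=
      setIntegral_mono (hg'.mono_set hxa) ((hff'.mono_set hxa).const_mul 2) fun t => by
        linarith [real_inner_le_norm (f t) (f' t)]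
    _ ≤ ∫ t in Iio a, 2 * (‖f t‖ * ‖f' t‖) :=
      setIntegral_mono_set (hff'.const_mul 2) (.of_forall fun t => by positivity)
        hxa.eventuallyLE
    _ = 2 * ∫ t in Iio a, ‖f t‖ * ‖f' t‖ := integral_const_mul _ _

end HalfLine

namespace MemQ

variable {ψ ψ' : ℝ → ℂ} (hQ : MemQ ψ ψ')
include hQ

theorem hasDerivAt_of_pos {x : ℝ} (hx : 0 < x) : HasDerivAt ψ (ψ' x) x :=
  (hQ.deriv_pos x hx).hasDerivAt (Ioi_mem_nhds hx)

theorem hasDerivAt_of_neg {x : ℝ} (hx : x < 0) : HasDerivAt ψ (ψ' x) x :=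
  (hQ.deriv_neg x hx).hasDerivAt (Iio_mem_nhds hx)

theorem hasDerivAt {x : ℝ} (hx : x ≠ 0) : HasDerivAt ψ (ψ' x) x :=
  hx.lt_or_gt.elim hQ.hasDerivAt_of_neg hQ.hasDerivAt_of_pos

theorem aestronglyMeasurable : AEStronglyMeasurable ψ := by
  have hcont : ContinuousOn ψ {0}ᶜ := fun x hx => (hQ.hasDerivAt hx).continuousAt.continuousWithinAt
  simpa only [restrict_compl_singleton] using
    hcont.aestronglyMeasurable (μ := volume) isOpen_compl_singleton.measurableSet

theorem aestronglyMeasurable_deriv : AEStronglyMeasurable ψ' := by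
  refine (_root_.aestronglyMeasurable_deriv ψ volume).congr ?_
  filter_upwards [Measure.ae_ne volume 0] with x hx
  exact (hQ.hasDerivAt hx).deriv

theorem integral_norm_mul_le :
    ∫ x, ‖ψ x‖ * ‖ψ' x‖ ≤ (∫ x, ‖ψ x‖ ^ 2) ^ (1 / 2 : ℝ) * (∫ x, ‖ψ' x‖ ^ 2) ^ (1 / 2 : ℝ) := by
  have hψ := ((memLp_two_iff_integrable_sq_norm hQ.aestronglyMeasurable).2 hQ.l2).norm
  have hψ' := ((memLp_two_iff_integrable_sq_norm hQ.aestronglyMeasurable_deriv).2 hQ.l2').norm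
  rw [← ENNReal.ofReal_ofNat] at hψ hψ'
  simpa only [Real.rpow_two] using integral_mul_le_Lp_mul_Lq_of_nonneg
    Real.HolderConjugate.two_two (.of_forall fun x => norm_nonneg (ψ x))
    (.of_forall fun x => norm_nonneg (ψ' x)) hψ hψ'

theorem integrable_norm_mul : Integrable (fun x => ‖ψ x‖ * ‖ψ' x‖) := by
  refine (hQ.l2.add hQ.l2').mono'
    (hQ.aestronglyMeasurable.norm.mul hQ.aestronglyMeasurable_deriv.norm) (.of_forall fun x => ?_)
  rw [Real.norm_of_nonneg (by positivity), Pi.add_apply]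
  nlinarith [sq_nonneg (‖ψ x‖ - ‖ψ' x‖), norm_nonneg (ψ x), norm_nonneg (ψ' x)]

theorem norm_sq_le {x : ℝ} (hx : x ≠ 0) : ‖ψ x‖ ^ 2 ≤ 2 * ∫ t, ‖ψ t‖ * ‖ψ' t‖ := by
  have hI := hQ.integrable_norm_mul
  have hI0 : 0 ≤ᵐ[volume] fun t => ‖ψ t‖ * ‖ψ' t‖ := .of_forall fun t => by positivity
  rcases hx.lt_or_gt with hx | hx
  · calc ‖ψ x‖ ^ 2 ≤ 2 * ∫ t in Iio 0, ‖ψ t‖ * ‖ψ' t‖ :=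
          norm_sq_le_of_hasDerivAt_Iio (fun t => hQ.hasDerivAt_of_neg) hQ.l2.integrableOn
            hI.integrableOn hx
      _ ≤ 2 * ∫ t, ‖ψ t‖ * ‖ψ' t‖ := by linarith [setIntegral_le_integral (s := Iio 0) hI hI0]
  · calc ‖ψ x‖ ^ 2 ≤ 2 * ∫ t in Ioi 0, ‖ψ t‖ * ‖ψ' t‖ :=
          norm_sq_le_of_hasDerivAt_Ioi (fun t => hQ.hasDerivAt_of_pos) hQ.l2.integrableOn
            hI.integrableOn hx
      _ ≤ 2 * ∫ t, ‖ψ t‖ * ‖ψ' t‖ := by linarith [setIntegral_le_integral (s := Ioi 0) hI hI0]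

theorem norm_jumpC_sq_le :
    ‖jumpC ψ‖ ^ 2 ≤ 8 * (∫ x, ‖ψ x‖ ^ 2) ^ (1 / 2 : ℝ) * (∫ x, ‖ψ' x‖ ^ 2) ^ (1 / 2 : ℝ) := by
  obtain ⟨a, ha⟩ := hQ.lim_pos
  obtain ⟨b, hb⟩ := hQ.lim_neg
  have ha_le : ‖a‖ ^ 2 ≤ 2 * ∫ t, ‖ψ t‖ * ‖ψ' t‖ := le_of_tendsto (ha.norm.pow 2)
    (eventually_nhdsWithin_of_forall fun x hx => hQ.norm_sq_le (ne_of_gt hx))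
  have hb_le : ‖b‖ ^ 2 ≤ 2 * ∫ t, ‖ψ t‖ * ‖ψ' t‖ := le_of_tendsto (hb.norm.pow 2)
    (eventually_nhdsWithin_of_forall fun x hx => hQ.norm_sq_le (ne_of_lt hx))
  rw [jumpC, ha.limUnder_eq, hb.limUnder_eq]
  nlinarith [hQ.integral_norm_mul_le, norm_sub_le a b, norm_nonneg (a - b),
    sq_nonneg (‖a‖ - ‖b‖)]

theorem integral_rpow_le {μ : ℝ} (hμ : 0 ≤ μ) :
    ∫ x, ‖ψ x‖ ^ (2 * μ + 2) ≤ (2 * ∫ t, ‖ψ t‖ * ‖ψ' t‖) ^ μ * ∫ x, ‖ψ x‖ ^ 2 := by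
  rw [← integral_const_mul]
  refine integral_mono_of_nonneg (.of_forall fun x => by positivity) (hQ.l2.const_mul _) ?_
  filter_upwards [Measure.ae_ne volume 0] with x hx
  calc ‖ψ x‖ ^ (2 * μ + 2) = (‖ψ x‖ ^ 2) ^ μ * ‖ψ x‖ ^ 2 := by
        rw [Real.rpow_add' (norm_nonneg _) (by positivity), Real.rpow_mul (norm_nonneg _),
          Real.rpow_two]
    _ ≤ (2 * ∫ t, ‖ψ t‖ * ‖ψ' t‖) ^ μ * ‖ψ x‖ ^ 2 := by gcongr; exact hQ.norm_sq_le hx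

theorem gagliardo_nirenberg {μ : ℝ} (hμ : 0 ≤ μ) :
    ∫ x, ‖ψ x‖ ^ (2 * μ + 2) ≤
      2 ^ μ * (∫ x, ‖ψ' x‖ ^ 2) ^ (μ / 2) * (∫ x, ‖ψ x‖ ^ 2) ^ (μ / 2 + 1) := by
  have hm : 0 ≤ ∫ x, ‖ψ x‖ ^ 2 := integral_nonneg fun x => by positivity
  have hB : 0 ≤ ∫ x, ‖ψ' x‖ ^ 2 := integral_nonneg fun x => by positivity
  have hI : 0 ≤ ∫ t, ‖ψ t‖ * ‖ψ' t‖ := integral_nonneg fun t => by positivity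
  calc ∫ x, ‖ψ x‖ ^ (2 * μ + 2)
      ≤ (2 * ∫ t, ‖ψ t‖ * ‖ψ' t‖) ^ μ * ∫ x, ‖ψ x‖ ^ 2 := hQ.integral_rpow_le hμ
    _ ≤ (2 * ((∫ x, ‖ψ x‖ ^ 2) ^ (1 / 2 : ℝ) * (∫ x, ‖ψ' x‖ ^ 2) ^ (1 / 2 : ℝ))) ^ μ *
          ∫ x, ‖ψ x‖ ^ 2 := by gcongr; exact hQ.integral_norm_mul_le
    _ = 2 ^ μ * (∫ x, ‖ψ' x‖ ^ 2) ^ (μ / 2) * (∫ x, ‖ψ x‖ ^ 2) ^ (μ / 2 + 1) := by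
      rw [Real.mul_rpow (by norm_num) (by positivity), Real.mul_rpow (by positivity)
        (by positivity), ← Real.rpow_mul hm, ← Real.rpow_mul hB,
        Real.rpow_add_one' hm (by positivity)]
      ring_nf

end MemQ

theorem stmt17 (μ γ lam m : ℝ) (hμ0 : 0 < μ) (hμ : μ < 2) (hγ : 0 < γ)
    (hlam : 0 < lam) (hm : 0 < m) :
    ∃ C₁ > 0, ∃ C₂ ≥ 0, ∀ ψ ψ' : ℝ → ℂ, MemQ ψ ψ' →
      (∫ x, ‖ψ x‖^2) = m →
      C₁ * nQsq ψ ψ' - C₂ ≤ Efun γ lam μ ψ ψ' := by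
  obtain ⟨C, hC, hjump⟩ := exists_mul_rpow_le_mul_add_const (k := 4 / γ * m ^ (1 / 2 : ℝ))
    (θ := 1 / 2) (ε := 1 / 8) (by positivity) (by norm_num) (by norm_num) (by norm_num)
  obtain ⟨C', hC', hpow⟩ := exists_mul_rpow_le_mul_add_const
    (k := lam / (2 * μ + 2) * (2 ^ μ * m ^ (μ / 2 + 1))) (θ := μ / 2) (ε := 1 / 8)
    (by positivity) (by positivity) (by linarith) (by norm_num)
  refine ⟨1 / 8, by norm_num, C + C' + m / 8, by positivity, fun ψ ψ' hQ hψ => ?_⟩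
  set B := ∫ x, ‖ψ' x‖ ^ 2
  have hB : 0 ≤ B := integral_nonneg fun x => by positivity
  have hJ : 1 / (2 * γ) * ‖jumpC ψ‖ ^ 2 ≤ 4 / γ * m ^ (1 / 2 : ℝ) * B ^ (1 / 2 : ℝ) := by
    calc 1 / (2 * γ) * ‖jumpC ψ‖ ^ 2
        ≤ 1 / (2 * γ) * (8 * m ^ (1 / 2 : ℝ) * B ^ (1 / 2 : ℝ)) := by
          gcongr; simpa only [hψ] using hQ.norm_jumpC_sq_le
      _ = 4 / γ * m ^ (1 / 2 : ℝ) * B ^ (1 / 2 : ℝ) := by field_simp; ring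
  have hN : lam / (2 * μ + 2) * ∫ x, ‖ψ x‖ ^ (2 * μ + 2) ≤
      lam / (2 * μ + 2) * (2 ^ μ * m ^ (μ / 2 + 1)) * B ^ (μ / 2) := by
    calc lam / (2 * μ + 2) * ∫ x, ‖ψ x‖ ^ (2 * μ + 2)
        ≤ lam / (2 * μ + 2) * (2 ^ μ * B ^ (μ / 2) * m ^ (μ / 2 + 1)) := by
          gcongr; simpa only [hψ] using hQ.gagliardo_nirenberg hμ0.le
      _ = _ := by ring
  rw [Efun, nQsq, hψ]
  linarith [hjump B hB, hpow B hB]
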